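/- arXiv:1705.07635 — 3 statements merged into one kernel-verified Lean document; each statement's English description precedes it below -/
import Mathlib

section
/- With the shift Λ* satisfying Λ*₁ = log(γ) − μ₁, the second moment of the control variable satisfies E_g[Z(Y)²] = exp(Λ*ᵗ Σ⁻¹ Λ*) · Φ(2(log(γ) − μ₁)/√Σ₁₁). -/
open MeasureTheory Matrix Real Filter

noncomputable def mvnPdf {n : ℕ} (m : Fin n → ℝ) (S : Matrix (Fin n) (Fin n) ℝ)
    (y : Fin n → ℝ) : ℝ :=
  Real.exp (-(1/2) * ((y - m) ⬝ᵥ S⁻¹.mulVec (y - m))) / Real.sqrt ((2 * Real.pi) ^ n * S.det)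

noncomputable def stdNormCDF (x : ℝ) : ℝ :=
  ∫ t in Set.Iic x, Real.exp (-t ^ 2 / 2) / Real.sqrt (2 * Real.pi)

/- ### auxiliary lemmas -/

lemma aux_sqrt_pow (x : ℝ) (hx : 0 ≤ x) (k : ℕ) : (Real.sqrt x) ^ k = Real.sqrt (x ^ k) := by
  induction k with
  | zero => simp
  | succ k ih => rw [pow_succ, pow_succ, ih, ← Real.sqrt_mul (pow_nonneg hx _)]

lemma aux_dot_symm {N : ℕ} (A : Matrix (Fin N) (Fin N) ℝ) (hA : Aᵀ = A)
    (x y : Fin N → ℝ) : x ⬝ᵥ A *ᵥ y = y ⬝ᵥ A *ᵥ x := by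
  conv_rhs => rw [← hA, Matrix.mulVec_transpose, dotProduct_comm, ← Matrix.dotProduct_mulVec]

lemma aux_quad_ident {N : ℕ} (A : Matrix (Fin N) (Fin N) ℝ) (hA : Aᵀ = A)
    (u L : Fin N → ℝ) :
    -(u ⬝ᵥ A *ᵥ u) + (1/2) * ((u - L) ⬝ᵥ A *ᵥ (u - L)) =
      L ⬝ᵥ A *ᵥ L - (1/2) * ((u + L) ⬝ᵥ A *ᵥ (u + L)) := by
  have h := aux_dot_symm A hA L u
  simp only [Matrix.mulVec_sub, Matrix.mulVec_add, dotProduct_sub, dotProduct_add,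
    sub_dotProduct, add_dotProduct]
  ring_nf

lemma aux_gauss1d (a : ℝ) :
    (∫ t : ℝ, Set.indicator (Set.Iic a) (fun t => Real.exp (-(1/2) * t ^ 2)) t) =
      Real.sqrt (2 * Real.pi) * stdNormCDF a := by
  rw [MeasureTheory.integral_indicator measurableSet_Iic, stdNormCDF]
  rw [MeasureTheory.integral_div]
  rw [mul_div_cancel₀]
  · congr 1; ext t; ring_nf
  · positivity

/-- Rotation invariance step. -/
lemma aux_rot {N : ℕ} (v : EuclideanSpace ℝ (Fin (N + 1))) (c : ℝ) :
    (∫ w : EuclideanSpace ℝ (Fin (N + 1)),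
        Set.indicator {w : EuclideanSpace ℝ (Fin (N + 1)) | inner ℝ v w ≤ c} (fun _ => (1:ℝ)) w *
          Real.exp (-(1/2) * inner ℝ w w)) =
      ∫ w : EuclideanSpace ℝ (Fin (N + 1)),
        Set.indicator {w : EuclideanSpace ℝ (Fin (N + 1)) | ‖v‖ * w 0 ≤ c} (fun _ => (1:ℝ)) w *
          Real.exp (-(1/2) * inner ℝ w w) := by
  set x : EuclideanSpace ℝ (Fin (N + 1)) := ‖v‖ • EuclideanSpace.single 0 1 with hx
  have hnx : ‖x‖ = ‖v‖ := by
    rw [hx, norm_smul, EuclideanSpace.norm_single, norm_one, mul_one, Real.norm_eq_abs,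
      abs_of_nonneg (norm_nonneg v)]
  set T : EuclideanSpace ℝ (Fin (N + 1)) ≃ₗᵢ[ℝ] EuclideanSpace ℝ (Fin (N + 1)) :=
    Submodule.reflection (Submodule.span ℝ {x - v})ᗮ with hT
  have hTx : T x = v := Submodule.reflection_sub hnx
  have hmp : MeasurePreserving T volume volume := T.measurePreserving
  have hemb : MeasurableEmbedding (⇑T) := T.toHomeomorph.measurableEmbedding
  rw [← hmp.integral_comp hemb]
  congr 1
  ext w
  have h1 : (inner ℝ v (T w) : ℝ) = ‖v‖ * w 0 := by
    have hxw : (inner ℝ x w : ℝ) = ‖v‖ * w 0 := by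
      rw [hx, real_inner_smul_left, EuclideanSpace.inner_single_left]
      simp
    conv_lhs => rw [← hTx]
    rw [T.inner_map_map, hxw]
  have h2 : (inner ℝ (T w) (T w) : ℝ) = inner ℝ w w := T.inner_map_map w w
  rw [h2]
  congr 1
  simp only [Set.indicator_apply, Set.mem_setOf_eq, h1]

lemma aux_S00_pos {N : ℕ} {S : Matrix (Fin (N + 1)) (Fin (N + 1)) ℝ} (hS : S.PosDef) :
    0 < S 0 0 := by
  exact hS.diag_pos

/-- The full-space Gaussian integral with an Iic condition in the first coordinate. -/
lemma aux_stdgauss_pi (N : ℕ) (a : ℝ) :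
    (∫ w : Fin (N + 1) → ℝ,
        Set.indicator {w : Fin (N + 1) → ℝ | w 0 ≤ a} (fun _ => (1:ℝ)) w *
          Real.exp (-(1/2) * (w ⬝ᵥ w))) =
      (Real.sqrt (2 * Real.pi)) ^ (N + 1) * stdNormCDF a := by
  set g : ℝ → ℝ := fun t => Real.exp (-(1/2) * t ^ 2) with hg
  set f : Fin (N + 1) → ℝ → ℝ := Fin.cons (Set.indicator (Set.Iic a) g) (fun _ => g) with hf
  have key : ∀ w : Fin (N + 1) → ℝ,
      Set.indicator {w : Fin (N + 1) → ℝ | w 0 ≤ a} (fun _ => (1:ℝ)) w *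
          Real.exp (-(1/2) * (w ⬝ᵥ w)) = ∏ i, f i (w i) := by
    intro w
    have hexp : Real.exp (-(1/2) * (w ⬝ᵥ w)) = ∏ i, g (w i) := by
      rw [hg]
      simp only []
      rw [← Real.exp_sum]
      congr 1
      simp only [dotProduct, Finset.mul_sum, ← Finset.sum_neg_distrib]
      congr 1; ext i; ring
    rw [hexp, Fin.prod_univ_succ, Fin.prod_univ_succ]
    simp only [hf, Fin.cons_zero, Fin.cons_succ, Set.indicator_apply, Set.mem_Iic,
      Set.mem_setOf_eq, ite_mul, one_mul, zero_mul]
  simp_rw [key]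
  rw [MeasureTheory.volume_pi, MeasureTheory.integral_fintype_prod_eq_prod (ι := Fin (N+1)) f, Fin.prod_univ_succ]
  simp only [hf, Fin.cons_zero, Fin.cons_succ]
  have h0 : (∫ t : ℝ, Set.indicator (Set.Iic a) g t) = Real.sqrt (2 * Real.pi) * stdNormCDF a :=
    aux_gauss1d a
  have h1 : (∫ t : ℝ, g t) = Real.sqrt (2 * Real.pi) := by
    rw [hg]
    simp only []
    rw [integral_gaussian (1/2 : ℝ), show (Real.pi / (1/2)) = 2 * Real.pi by ring]
  rw [h0, h1]
  simp [Finset.prod_const]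
  ring

open scoped MatrixOrder in
set_option maxHeartbeats 1000000 in
lemma aux_marginal {N : ℕ} (S : Matrix (Fin (N + 1)) (Fin (N + 1)) ℝ) (hS : S.PosDef)
    (μ : Fin (N + 1) → ℝ) (c : ℝ) :
    (∫ y : Fin (N + 1) → ℝ,
        Set.indicator {y : Fin (N + 1) → ℝ | y 0 ≤ c} (fun _ => (1:ℝ)) y * mvnPdf μ S y) =
      stdNormCDF ((c - μ 0) / Real.sqrt (S 0 0)) := by
  have hdetS : 0 < S.det := hS.det_pos
  have hS00 : 0 < S 0 0 := aux_S00_pos hS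
  set D : ℝ := Real.sqrt ((2 * Real.pi) ^ (N + 1) * S.det) with hD
  have hDpos : 0 < D := Real.sqrt_pos.2 (by positivity)
  set c' : ℝ := c - μ 0 with hc'
  -- Step 1: translation
  have step1 : (∫ y : Fin (N + 1) → ℝ,
        Set.indicator {y : Fin (N + 1) → ℝ | y 0 ≤ c} (fun _ => (1:ℝ)) y * mvnPdf μ S y) =
      D⁻¹ * ∫ z : Fin (N + 1) → ℝ,
        Set.indicator {z : Fin (N + 1) → ℝ | z 0 ≤ c'} (fun _ => (1:ℝ)) z *
          Real.exp (-(1/2) * (z ⬝ᵥ S⁻¹ *ᵥ z)) := by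
    rw [← MeasureTheory.integral_add_left_eq_self
      (fun y : Fin (N + 1) → ℝ =>
        Set.indicator {y : Fin (N + 1) → ℝ | y 0 ≤ c} (fun _ => (1:ℝ)) y * mvnPdf μ S y) μ,
      ← MeasureTheory.integral_const_mul]
    congr 1
    ext z
    have h1 : μ + z - μ = z := by abel
    have h2 : ((μ + z) 0 ≤ c) = (z 0 ≤ c') := by
      simp only [Pi.add_apply, hc']
      exact propext ⟨fun h => by linarith, fun h => by linarith⟩
    simp only [mvnPdf, h1, Set.indicator_apply, Set.mem_setOf_eq, h2]
    rw [← hD]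
    by_cases h : z 0 ≤ c' <;> simp [h] <;> field_simp
  rw [step1]
  -- Setup: square root of S
  set B : Matrix (Fin (N + 1)) (Fin (N + 1)) ℝ := CFC.sqrt S with hB
  have hBB : B * B = S := CFC.sqrt_mul_sqrt_self S hS.posSemidef.nonneg
  have hBt : Bᵀ = B := (Matrix.nonneg_iff_posSemidef.mp (CFC.sqrt_nonneg S)).1
  have hdetB_sq : B.det * B.det = S.det := by rw [← Matrix.det_mul, hBB]
  have hdetB_nonneg : 0 ≤ B.det := by
    obtain ⟨C, hC⟩ := CStarAlgebra.nonneg_iff_eq_star_mul_self.mp (CFC.sqrt_nonneg S)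
    rw [show B = Cᴴ * C from hC]
    rw [Matrix.det_mul, Matrix.det_conjTranspose, star_trivial]
    exact mul_self_nonneg _
  have hdetB_pos : 0 < B.det := by
    rcases hdetB_nonneg.lt_or_eq with h | h
    · exact h
    · exfalso; rw [← h] at hdetB_sq; simp at hdetB_sq; rw [← hdetB_sq] at hdetS; simp at hdetS
  have hdetB : B.det = Real.sqrt S.det := by
    rw [← hdetB_sq, Real.sqrt_mul_self hdetB_nonneg]
  have hu : IsUnit B.det := isUnit_iff_ne_zero.2 hdetB_pos.ne'
  have hinv : B * (S⁻¹ * B) = 1 := by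
    rw [← hBB, Matrix.mul_inv_rev, Matrix.mul_assoc, Matrix.nonsing_inv_mul B hu,
      Matrix.mul_one, Matrix.mul_nonsing_inv B hu]
  have hq : ∀ w : Fin (N + 1) → ℝ, (B *ᵥ w) ⬝ᵥ S⁻¹ *ᵥ (B *ᵥ w) = w ⬝ᵥ w := by
    intro w
    have hBv : B *ᵥ w = w ᵥ* B := by
      conv_lhs => rw [← hBt]
      exact Matrix.mulVec_transpose B w
    rw [Matrix.mulVec_mulVec]
    conv_lhs => rw [hBv]
    rw [Matrix.dotProduct_mulVec, Matrix.vecMul_vecMul, ← Matrix.dotProduct_mulVec,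
      ← Matrix.mul_assoc, Matrix.mul_assoc, hinv]
    simp
  -- Step 2: linear substitution z = B *ᵥ w
  set G : (Fin (N + 1) → ℝ) → ℝ := fun z =>
    Set.indicator {z : Fin (N + 1) → ℝ | z 0 ≤ c'} (fun _ => (1:ℝ)) z *
      Real.exp (-(1/2) * (z ⬝ᵥ S⁻¹ *ᵥ z)) with hG
  have hemb : MeasurableEmbedding (⇑(Matrix.toLin' B)) := by
    have inst : Invertible B := B.invertibleOfIsUnitDet hu
    have h := ((B.toLinearEquiv' inst).toContinuousLinearEquiv).toHomeomorph.measurableEmbedding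
    have hh : ∀ w, (B.toLinearEquiv' inst) w = Matrix.toLin' B w := fun w => by
      rw [← Matrix.toLinearEquiv'_apply B inst]; rfl
    have hco : ⇑((B.toLinearEquiv' inst).toContinuousLinearEquiv).toHomeomorph
        = ⇑(Matrix.toLin' B) := by
      funext w
      simpa using hh w
    rwa [hco] at h
  have step2 : (∫ z : Fin (N + 1) → ℝ, G z) = B.det * ∫ w : Fin (N + 1) → ℝ, G (B *ᵥ w) := by
    have h1 : (∫ z : Fin (N + 1) → ℝ, G z ∂(Measure.map (⇑(Matrix.toLin' B)) volume))
        = ∫ w : Fin (N + 1) → ℝ, G (B *ᵥ w) := by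
      rw [hemb.integral_map]
      congr 1
    have h2 : (∫ z : Fin (N + 1) → ℝ, G z ∂(Measure.map (⇑(Matrix.toLin' B)) volume))
        = B.det⁻¹ * ∫ z : Fin (N + 1) → ℝ, G z := by
      rw [Real.map_matrix_volume_pi_eq_smul_volume_pi hdetB_pos.ne', integral_smul_measure,
        ENNReal.toReal_ofReal (abs_nonneg _), abs_of_pos (inv_pos.2 hdetB_pos), smul_eq_mul]
    rw [← h1, h2, ← mul_assoc, mul_inv_cancel₀ hdetB_pos.ne', one_mul]
  rw [step2]
  -- Step 3: rotate
  have hrow : ∀ j, B j 0 = B 0 j := by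
    intro j
    have := congrFun (congrFun hBt 0) j
    simpa [Matrix.transpose_apply] using this
  set v' : EuclideanSpace ℝ (Fin (N + 1)) := (WithLp.equiv 2 (Fin (N + 1) → ℝ)).symm (B 0) with hv'
  have hv'i : ∀ i, v' i = B 0 i := fun i => rfl
  have hnv : ‖v'‖ = Real.sqrt (S 0 0) := by
    have h1 : (inner ℝ v' v' : ℝ) = S 0 0 := by
      rw [PiLp.inner_apply]
      simp only [RCLike.inner_apply, starRingEnd_apply, star_trivial, hv'i]
      have hSBB : S 0 0 = (B * B) 0 0 := by rw [hBB]
      rw [hSBB, Matrix.mul_apply]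
      congr 1
      ext j
      rw [hrow j]
    rw [← Real.sqrt_sq (norm_nonneg v'), ← real_inner_self_eq_norm_sq, h1]
  have step3 : (∫ w : Fin (N + 1) → ℝ, G (B *ᵥ w)) =
      (Real.sqrt (2 * Real.pi)) ^ (N + 1) * stdNormCDF (c' / Real.sqrt (S 0 0)) := by
    have e := EuclideanSpace.volume_preserving_symm_measurableEquiv_toLp (Fin (N + 1))
    set em := (MeasurableEquiv.toLp 2 (Fin (N + 1) → ℝ)).symm with hem
    have hcoord : ∀ (u : EuclideanSpace ℝ (Fin (N + 1))) i, (em u) i = u i := fun u i => rfl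
    have hdot2 : ∀ u : EuclideanSpace ℝ (Fin (N + 1)),
        (em u) ⬝ᵥ (em u) = (inner ℝ u u : ℝ) := by
      intro u
      rw [PiLp.inner_apply]
      simp only [RCLike.inner_apply, starRingEnd_apply, star_trivial, hcoord]
      rfl
    have h1 : (∫ w : Fin (N + 1) → ℝ, G (B *ᵥ w)) =
        ∫ u : EuclideanSpace ℝ (Fin (N + 1)),
          Set.indicator {u : EuclideanSpace ℝ (Fin (N + 1)) | inner ℝ v' u ≤ c'}
            (fun _ => (1:ℝ)) u * Real.exp (-(1/2) * inner ℝ u u) := by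
      rw [← e.integral_comp' (fun w => G (B *ᵥ w))]
      congr 1
      ext u
      have hdot : B 0 ⬝ᵥ (em u) = (inner ℝ v' u : ℝ) := by
        rw [PiLp.inner_apply]
        simp only [RCLike.inner_apply, starRingEnd_apply, star_trivial, hv'i, hcoord]
        exact Finset.sum_congr rfl fun x _ => mul_comm _ _
      have hc0 : (B *ᵥ (em u)) 0 = B 0 ⬝ᵥ (em u) := rfl
      have hmem : ((B *ᵥ (em u)) 0 ≤ c') = ((inner ℝ v' u : ℝ) ≤ c') :=
        congrArg (fun t => t ≤ c') (hc0.trans hdot)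
      simp only [hG, Set.indicator_apply, Set.mem_setOf_eq, hmem, hq, hdot2]
    rw [h1, aux_rot v' c']
    have hs : 0 < Real.sqrt (S 0 0) := Real.sqrt_pos.2 hS00
    have h2 : (∫ u : EuclideanSpace ℝ (Fin (N + 1)),
          Set.indicator {u : EuclideanSpace ℝ (Fin (N + 1)) | ‖v'‖ * u 0 ≤ c'}
            (fun _ => (1:ℝ)) u * Real.exp (-(1/2) * inner ℝ u u)) =
        ∫ w : Fin (N + 1) → ℝ,
          Set.indicator {w : Fin (N + 1) → ℝ | w 0 ≤ c' / Real.sqrt (S 0 0)}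
            (fun _ => (1:ℝ)) w * Real.exp (-(1/2) * (w ⬝ᵥ w)) := by
      rw [← e.integral_comp' (fun w => Set.indicator
        {w : Fin (N + 1) → ℝ | w 0 ≤ c' / Real.sqrt (S 0 0)} (fun _ => (1:ℝ)) w *
        Real.exp (-(1/2) * (w ⬝ᵥ w)))]
      congr 1
      ext u
      have hmem : (‖v'‖ * u 0 ≤ c') = ((em u) 0 ≤ c' / Real.sqrt (S 0 0)) := by
        rw [hcoord u 0, hnv]
        refine propext ⟨fun h => ?_, fun h => ?_⟩
        · rw [le_div_iff₀ hs]; linarith [h]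
        · calc Real.sqrt (S 0 0) * u 0
              ≤ Real.sqrt (S 0 0) * (c' / Real.sqrt (S 0 0)) :=
                mul_le_mul_of_nonneg_left h hs.le
            _ = c' := by field_simp
      simp only [Set.indicator_apply, Set.mem_setOf_eq, hmem, hdot2]
    rw [h2, aux_stdgauss_pi N (c' / Real.sqrt (S 0 0))]
  rw [step3]
  -- final arithmetic
  rw [hdetB, hD, Real.sqrt_mul (by positivity : (0:ℝ) ≤ (2 * Real.pi) ^ (N + 1)),
    ← aux_sqrt_pow (2 * Real.pi) (by positivity) (N + 1)]
  have h1 : 0 < Real.sqrt (2 * Real.pi) := Real.sqrt_pos.2 (by positivity)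
  have h2 : 0 < Real.sqrt S.det := Real.sqrt_pos.2 hdetS
  field_simp

theorem stmt6 {n : ℕ} (m Λ : Fin (n + 1) → ℝ) (S : Matrix (Fin (n + 1)) (Fin (n + 1)) ℝ)
    (hS : S.PosDef) (γ : ℝ) (hγ : 0 < γ)
    (hΛ : Λ 0 = Real.log γ - m 0) :
    (∫ y : Fin (n + 1) → ℝ,
        Set.indicator {y : Fin (n + 1) → ℝ | Real.exp (y 0) ≤ γ} (fun _ => (1 : ℝ)) y *
          (mvnPdf m S y / mvnPdf (m + Λ) S y) ^ 2 * mvnPdf (m + Λ) S y) =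
      Real.exp (Λ ⬝ᵥ S⁻¹.mulVec Λ) *
        stdNormCDF (2 * (Real.log γ - m 0) / Real.sqrt (S 0 0)) := by
  have hdetS : 0 < S.det := hS.det_pos
  have hD : (0:ℝ) < Real.sqrt ((2 * Real.pi) ^ (n+1) * S.det) :=
    Real.sqrt_pos.2 (mul_pos (by positivity) hdetS)
  have hAt : S⁻¹ᵀ = S⁻¹ := hS.inv.1
  have key : ∀ y : Fin (n + 1) → ℝ,
      Set.indicator {y : Fin (n + 1) → ℝ | Real.exp (y 0) ≤ γ} (fun _ => (1 : ℝ)) y *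
          (mvnPdf m S y / mvnPdf (m + Λ) S y) ^ 2 * mvnPdf (m + Λ) S y =
      Real.exp (Λ ⬝ᵥ S⁻¹ *ᵥ Λ) *
        (Set.indicator {y : Fin (n + 1) → ℝ | y 0 ≤ Real.log γ} (fun _ => (1:ℝ)) y *
          mvnPdf (m - Λ) S y) := by
    intro y
    have hmem : (Real.exp (y 0) ≤ γ) = (y 0 ≤ Real.log γ) :=
      propext (Real.le_log_iff_exp_le hγ).symm
    simp only [mvnPdf]
    have hsub1 : y - (m + Λ) = y - m - Λ := by abel
    have hsub2 : y - (m - Λ) = y - m + Λ := by abel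
    rw [hsub1, hsub2]
    set u := y - m with hu
    set a := -(1/2 : ℝ) * (u ⬝ᵥ S⁻¹ *ᵥ u) with ha
    set b := -(1/2 : ℝ) * ((u - Λ) ⬝ᵥ S⁻¹ *ᵥ (u - Λ)) with hb
    set cc := -(1/2 : ℝ) * ((u + Λ) ⬝ᵥ S⁻¹ *ᵥ (u + Λ)) with hcc
    set D := Real.sqrt ((2 * Real.pi) ^ (n+1) * S.det) with hDdef
    have h2ab : a + a - b = Λ ⬝ᵥ S⁻¹ *ᵥ Λ + cc := by
      have hident := aux_quad_ident S⁻¹ hAt u Λ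
      rw [ha, hb, hcc]
      linarith [hident]
    have hmain : (Real.exp a / D / (Real.exp b / D))^2 * (Real.exp b / D)
        = Real.exp (Λ ⬝ᵥ S⁻¹ *ᵥ Λ) * (Real.exp cc / D) := by
      have h1 : Real.exp a / D / (Real.exp b / D) = Real.exp (a - b) := by
        rw [Real.exp_sub]
        field_simp
      rw [h1]
      calc Real.exp (a - b) ^ 2 * (Real.exp b / D)
          = (Real.exp (a - b) * Real.exp (a - b) * Real.exp b) / D := by ring
        _ = Real.exp ((a - b) + ((a - b) + b)) / D := by
            rw [Real.exp_add, Real.exp_add]; ring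
        _ = Real.exp (a + a - b) / D := by ring_nf
        _ = Real.exp (Λ ⬝ᵥ S⁻¹ *ᵥ Λ) * (Real.exp cc / D) := by
            rw [h2ab, Real.exp_add]; ring
    simp only [Set.indicator_apply, Set.mem_setOf_eq, hmem]
    rw [mul_assoc, hmain]
    ring
  simp only [key]
  rw [MeasureTheory.integral_const_mul, aux_marginal S hS (m - Λ) (Real.log γ)]
  congr 2
  rw [Pi.sub_apply, hΛ]
  ring
end

section
/- With the shift Λ* satisfying Λ*₁ = log(γ) − μ₁, the fourth-moment-type quantity satisfies E_g[L(Y)⁴ 1{exp(Y₁) ≤ γ}] = exp(6 Λ*ᵗ Σ⁻¹ Λ*) · Φ(4(log(γ) − μ₁)/√Σ₁₁). -/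
open MeasureTheory Matrix Real Filter

namespace Stmt7Aux

variable {N : ℕ}

lemma dot_self_pos {u : Fin N → ℝ} (hu : u ≠ 0) : 0 < u ⬝ᵥ u := by
  rcases lt_or_eq_of_le (Finset.sum_nonneg fun i _ => mul_self_nonneg (u i) : 0 ≤ u ⬝ᵥ u) with h | h
  · exact h
  · exact absurd (dotProduct_self_eq_zero.mp h.symm) hu

/-- Householder reflection sending `w` (row-wise) to `r • e₀`. -/
lemma exists_householder (w : Fin (N + 1) → ℝ) (r : ℝ) (hr : 0 < r)
    (hw : w ⬝ᵥ w = r ^ 2) :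
    ∃ Q : Matrix (Fin (N + 1)) (Fin (N + 1)) ℝ,
      Q * Qᵀ = 1 ∧ ∀ j, (w ᵥ* Q) j = if j = 0 then r else 0 := by
  set e : Fin (N + 1) → ℝ := fun j => if j = 0 then r else 0 with he
  have hee : e ⬝ᵥ e = r ^ 2 := by
    simp [he, dotProduct, ite_mul, mul_ite, Finset.sum_ite_eq', sq]
  have hwe : w ⬝ᵥ e = r * w 0 := by
    simp [he, dotProduct, mul_ite, mul_comm]
  have hew : e ⬝ᵥ w = r * w 0 := by
    simp [he, dotProduct, ite_mul]
  by_cases hu : w = e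
  · refine ⟨1, by simp, fun j => ?_⟩
    rw [hu]; simp [Matrix.vecMul_one, he]
  · set u : Fin (N + 1) → ℝ := w - e with hud
    have hu0 : u ≠ 0 := sub_ne_zero.mpr hu
    have huu : 0 < u ⬝ᵥ u := dot_self_pos hu0
    have hwu : w ⬝ᵥ u = r ^ 2 - r * w 0 := by
      rw [hud, dotProduct_sub, hw, hwe]
    have huu2 : u ⬝ᵥ u = 2 * (w ⬝ᵥ u) := by
      rw [hud, sub_dotProduct, dotProduct_sub, dotProduct_sub, hw, hwe, hew, hee]; ring
    set c : ℝ := 2 / (u ⬝ᵥ u) with hc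
    refine ⟨Matrix.of fun i j => (if i = j then (1 : ℝ) else 0) - c * u i * u j, ?_, ?_⟩
    · ext i j
      simp only [Matrix.mul_apply, Matrix.transpose_apply, Matrix.of_apply, Matrix.one_apply]
      have expand : ∀ k : Fin (N + 1),
          ((if i = k then (1:ℝ) else 0) - c * u i * u k) *
            ((if j = k then (1:ℝ) else 0) - c * u j * u k)
          = (if i = k then (1:ℝ) else 0) * (if j = k then (1:ℝ) else 0)
            - (if i = k then (1:ℝ) else 0) * (c * u j * u k)
            - (c * u i * u k) * (if j = k then (1:ℝ) else 0)
            + (c * u i * u k) * (c * u j * u k) := fun k => by ring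
      simp only [expand]
      rw [Finset.sum_add_distrib, Finset.sum_sub_distrib, Finset.sum_sub_distrib]
      have h1 : (∑ k, (if i = k then (1:ℝ) else 0) * (if j = k then (1:ℝ) else 0))
          = if i = j then 1 else 0 := by
        simp [ite_mul, Finset.sum_ite_eq]
      have h2 : (∑ k, (if i = k then (1:ℝ) else 0) * (c * u j * u k)) = c * u j * u i := by
        simp [ite_mul, Finset.sum_ite_eq]
      have h3 : (∑ k, (c * u i * u k) * (if j = k then (1:ℝ) else 0)) = c * u i * u j := by
        simp [mul_ite, Finset.sum_ite_eq]
      have h4 : (∑ k, (c * u i * u k) * (c * u j * u k)) = c * c * u i * u j * (u ⬝ᵥ u) := by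
        rw [show (u ⬝ᵥ u) = ∑ k, u k * u k from rfl, Finset.mul_sum]
        exact Finset.sum_congr rfl fun k _ => by ring
      rw [h1, h2, h3, h4]
      have : c * c * u i * u j * (u ⬝ᵥ u) = 2 * (c * u i * u j) := by
        rw [hc]; field_simp
      rw [this]
      ring
    · intro j
      have hvm : (w ᵥ* (Matrix.of fun i j => (if i = j then (1 : ℝ) else 0) - c * u i * u j)) j
          = w j - c * (w ⬝ᵥ u) * u j := by
        simp only [Matrix.vecMul, dotProduct, Matrix.of_apply, mul_sub]
        rw [Finset.sum_sub_distrib]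
        congr 1
        · simp [mul_ite, Finset.sum_ite_eq']
        · rw [Finset.mul_sum, Finset.sum_mul]
          exact Finset.sum_congr rfl fun k _ => by ring
      rw [hvm]
      have h2 : (2 * (w ⬝ᵥ u)) ≠ 0 := by rw [← huu2]; exact ne_of_gt huu
      have hcw : c * (w ⬝ᵥ u) = 1 := by
        rw [hc, huu2, div_mul_eq_mul_div, mul_comm 2 (w ⬝ᵥ u), ← mul_comm 2 (w ⬝ᵥ u)]
        exact div_self h2
      rw [hcw, one_mul, hud]
      simp [he]


lemma posdef_diag_pos {S : Matrix (Fin (N + 1)) (Fin (N + 1)) ℝ} (hS : S.PosDef) :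
    0 < S 0 0 := by
  have h := hS.dotProduct_mulVec_pos (x := Pi.single 0 1) (by
    intro h
    have := congrFun h 0
    simp [Pi.single_apply] at this)
  simpa [Matrix.mulVec_single, single_dotProduct] using h

open scoped MatrixOrder in
lemma exists_B {S : Matrix (Fin (N + 1)) (Fin (N + 1)) ℝ} (hS : S.PosDef) :
    ∃ B : Matrix (Fin (N + 1)) (Fin (N + 1)) ℝ,
      B * Bᵀ = S ∧ B.det ≠ 0 ∧ ∀ j, B 0 j = if j = 0 then Real.sqrt (S 0 0) else 0 := by
  have hps := hS.posSemidef
  set M := CFC.sqrt S with hM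
  have hMM : M * M = S := CFC.sqrt_mul_sqrt_self S hps.nonneg
  have hMsym : Mᵀ = M := by
    have h := (CFC.sqrt_nonneg S).posSemidef.1
    ext i j
    have := congrFun (congrFun h i) j
    simpa [Matrix.conjTranspose_apply] using this
  have hS00 : 0 < S 0 0 := posdef_diag_pos hS
  set r := Real.sqrt (S 0 0) with hrdef
  have hr : 0 < r := Real.sqrt_pos.mpr hS00
  set w : Fin (N + 1) → ℝ := M 0 with hwdef
  have hww : w ⬝ᵥ w = r ^ 2 := by
    have : w ⬝ᵥ w = (M * Mᵀ) 0 0 := by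
      simp [Matrix.mul_apply, dotProduct, Matrix.transpose_apply, hwdef]
    rw [this, hMsym, hMM, hrdef, Real.sq_sqrt hS00.le]
  obtain ⟨Q, hQQ, hQw⟩ := exists_householder w r hr hww
  refine ⟨M * Q, ?_, ?_, ?_⟩
  · rw [Matrix.transpose_mul, mul_assoc, ← mul_assoc Q, hQQ, one_mul, hMsym, hMM]
  · intro h
    have hdet : S.det = ((M * Q).det) * ((M * Q).det) := by
      conv_lhs => rw [← show (M * Q) * (M * Q)ᵀ = S by
        rw [Matrix.transpose_mul, mul_assoc, ← mul_assoc Q, hQQ, one_mul, hMsym, hMM]]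
      rw [Matrix.det_mul, Matrix.det_transpose]
    rw [h, mul_zero] at hdet
    exact (ne_of_gt hS.det_pos) hdet
  · intro j
    have : (M * Q) 0 j = (w ᵥ* Q) j := by
      simp [Matrix.mul_apply, Matrix.vecMul, dotProduct, hwdef]
    rw [this, hQw]


lemma measurable_mvnPdf (μ : Fin N → ℝ) (S : Matrix (Fin N) (Fin N) ℝ) :
    Measurable (mvnPdf μ S) := by
  unfold mvnPdf
  apply Measurable.div _ measurable_const
  apply Real.measurable_exp.comp
  apply Measurable.const_mul
  simp only [dotProduct, Matrix.mulVec, Pi.sub_apply]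
  apply Finset.measurable_sum
  intro i _
  apply Measurable.mul
  · exact (measurable_pi_apply i).sub measurable_const
  · apply Finset.measurable_sum
    intro j _
    exact measurable_const.mul ((measurable_pi_apply j).sub measurable_const)

lemma gauss_integral_one : (∫ t : ℝ, Real.exp (-t ^ 2 / 2) / Real.sqrt (2 * Real.pi)) = 1 := by
  rw [MeasureTheory.integral_div]
  have h : ∀ t : ℝ, -t ^ 2 / 2 = -(1/2 : ℝ) * t ^ 2 := fun t => by ring
  simp_rw [h]
  rw [integral_gaussian, show Real.pi / (1/2 : ℝ) = 2 * Real.pi by ring]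
  exact div_self (ne_of_gt (Real.sqrt_pos.mpr (by positivity)))

lemma dot_transpose (v w : Fin (N + 1) → ℝ) (A : Matrix (Fin (N + 1)) (Fin (N + 1)) ℝ) :
    (A *ᵥ v) ⬝ᵥ w = v ⬝ᵥ (Aᵀ *ᵥ w) :=
  calc (A *ᵥ v) ⬝ᵥ w = w ⬝ᵥ (A *ᵥ v) := dotProduct_comm _ _
    _ = (w ᵥ* A) ⬝ᵥ v := dotProduct_mulVec _ _ _
    _ = v ⬝ᵥ (w ᵥ* A) := dotProduct_comm _ _
    _ = v ⬝ᵥ (Aᵀ *ᵥ w) := by rw [Matrix.mulVec_transpose]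

lemma marg {S : Matrix (Fin (N + 1)) (Fin (N + 1)) ℝ} (hS : S.PosDef) (μ : Fin (N + 1) → ℝ)
    (a : ℝ) :
    (∫ y : Fin (N + 1) → ℝ,
        Set.indicator {y : Fin (N + 1) → ℝ | y 0 ≤ a} (fun _ => (1 : ℝ)) y * mvnPdf μ S y)
      = stdNormCDF ((a - μ 0) / Real.sqrt (S 0 0)) := by
  obtain ⟨B, hBS, hBdet, hBrow⟩ := exists_B hS
  have hS00 : 0 < S 0 0 := posdef_diag_pos hS
  set r := Real.sqrt (S 0 0) with hrdef
  have hr : 0 < r := Real.sqrt_pos.mpr hS00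
  set c := (a - μ 0) / r with hcdef
  set g : (Fin (N + 1) → ℝ) → ℝ :=
    fun y => Set.indicator {y : Fin (N + 1) → ℝ | y 0 ≤ a} (fun _ => (1 : ℝ)) y * mvnPdf μ S y
    with hgdef
  have hgmeas : Measurable g := by
    apply Measurable.mul _ (measurable_mvnPdf μ S)
    exact Measurable.indicator measurable_const
      (measurableSet_le (measurable_pi_apply 0) measurable_const)
  -- facts about B
  have hdd : B.det * B.det = S.det := by rw [← hBS, Matrix.det_mul, Matrix.det_transpose]
  have habs : (0:ℝ) < |B.det| := abs_pos.mpr hBdet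
  have hdS : (0:ℝ) < S.det := hS.det_pos
  have hone : Bᵀ * (S⁻¹ * B) = 1 := by
    have hSinv : S⁻¹ = Bᵀ⁻¹ * B⁻¹ := by rw [← hBS, Matrix.mul_inv_rev]
    have h1 : Bᵀ * Bᵀ⁻¹ = 1 := Matrix.mul_nonsing_inv _ (by rw [Matrix.det_transpose]; exact isUnit_iff_ne_zero.mpr hBdet)
    have h2 : B⁻¹ * B = 1 := Matrix.nonsing_inv_mul _ (isUnit_iff_ne_zero.mpr hBdet)
    calc Bᵀ * (S⁻¹ * B) = (Bᵀ * Bᵀ⁻¹) * (B⁻¹ * B) := by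
          rw [hSinv]; simp only [mul_assoc]
      _ = 1 := by rw [h1, h2, one_mul]
  have hquad : ∀ x : Fin (N + 1) → ℝ, (B *ᵥ x) ⬝ᵥ (S⁻¹ *ᵥ (B *ᵥ x)) = x ⬝ᵥ x := by
    intro x
    calc (B *ᵥ x) ⬝ᵥ (S⁻¹ *ᵥ (B *ᵥ x)) = x ⬝ᵥ (Bᵀ *ᵥ (S⁻¹ *ᵥ (B *ᵥ x))) := dot_transpose _ _ _
      _ = x ⬝ᵥ ((Bᵀ * (S⁻¹ * B)) *ᵥ x) := by rw [Matrix.mulVec_mulVec, Matrix.mulVec_mulVec,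
            mul_assoc]
      _ = x ⬝ᵥ x := by rw [hone, Matrix.one_mulVec]
  have hx0 : ∀ x : Fin (N + 1) → ℝ, (B *ᵥ x) 0 = r * x 0 := by
    intro x
    show (B 0) ⬝ᵥ x = r * x 0
    unfold dotProduct
    rw [Finset.sum_congr rfl fun j _ => by rw [hBrow j]]
    simp [ite_mul, Finset.sum_ite_eq']
  -- step 1 : translation
  have step1 : (∫ y, g y) = ∫ x, g (x + μ) := (integral_add_right_eq_self g μ).symm
  -- step 2 : linear change of variables
  set L := Matrix.toLin' B with hL
  have hLdet : LinearMap.det (L : (Fin (N+1) → ℝ) →ₗ[ℝ] (Fin (N+1) → ℝ)) ≠ 0 := by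
    rw [hL, LinearMap.det_toLin']; exact hBdet
  have hmap : Measure.map L volume = ENNReal.ofReal |B.det|⁻¹ • volume := by
    have h := MeasureTheory.Measure.map_linearMap_addHaar_pi_eq_smul_addHaar hLdet (volume : Measure (Fin (N+1) → ℝ))
    rwa [hL, LinearMap.det_toLin', abs_inv] at h
  have hmeas2 : Measurable fun x : Fin (N + 1) → ℝ => g (x + μ) :=
    hgmeas.comp (measurable_id.add_const μ)
  have step2 : (∫ x, g (x + μ)) = |B.det| * ∫ x, g (B *ᵥ x + μ) := by
    calc (∫ x, g (x + μ))
        = ∫ x, g (x + μ) ∂(ENNReal.ofReal |B.det| • Measure.map L volume) := by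
          rw [hmap, smul_smul, ← ENNReal.ofReal_mul habs.le,
            mul_inv_cancel₀ (ne_of_gt habs), ENNReal.ofReal_one, one_smul]
      _ = |B.det| * ∫ x, g (x + μ) ∂(Measure.map L volume) := by
          rw [integral_smul_measure, ENNReal.toReal_ofReal habs.le, smul_eq_mul]
      _ = |B.det| * ∫ x, g (L x + μ) := by
          rw [integral_map (by fun_prop) hmeas2.aestronglyMeasurable]
      _ = |B.det| * ∫ x, g (B *ᵥ x + μ) := by simp_rw [hL, Matrix.toLin'_apply]
  -- pointwise product form
  set gauss : ℝ → ℝ := fun t => Real.exp (-t ^ 2 / 2) / Real.sqrt (2 * Real.pi) with hgauss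
  set f : Fin (N + 1) → ℝ → ℝ :=
    fun i t => (if i = 0 then (if t ≤ c then (1:ℝ) else 0) else 1) * gauss t with hfdef
  have hconst : |B.det| / Real.sqrt ((2*Real.pi)^(N+1) * S.det)
      = ((Real.sqrt (2*Real.pi)) ^ (N+1))⁻¹ := by
    have h1 : |B.det| = Real.sqrt S.det := by
      rw [← Real.sqrt_sq_eq_abs, sq, hdd]
    have hsp : Real.sqrt ((2*Real.pi)^(N+1)) = (Real.sqrt (2*Real.pi))^(N+1) := by
      rw [show ((2*Real.pi)^(N+1) : ℝ) = ((Real.sqrt (2*Real.pi))^(N+1))^2 by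
        rw [← pow_mul, mul_comm (N+1) 2, pow_mul, Real.sq_sqrt (by positivity)]]
      exact Real.sqrt_sq (by positivity)
    have hsd : Real.sqrt S.det ≠ 0 := ne_of_gt (Real.sqrt_pos.mpr hdS)
    have hsp2 : (Real.sqrt (2*Real.pi))^(N+1) ≠ 0 := by positivity
    rw [h1, Real.sqrt_mul (by positivity) S.det, hsp]
    field_simp
  have hpoint : ∀ x : Fin (N + 1) → ℝ, |B.det| * g (B *ᵥ x + μ) = ∏ i, f i (x i) := by
    intro x
    have hind : Set.indicator {y : Fin (N+1) → ℝ | y 0 ≤ a} (fun _ => (1:ℝ)) (B *ᵥ x + μ)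
        = if x 0 ≤ c then 1 else 0 := by
      rw [Set.indicator_apply]
      refine if_congr ?_ rfl rfl
      simp only [Set.mem_setOf_eq, Pi.add_apply, hx0 x]
      rw [hcdef, le_div_iff₀ hr]
      constructor <;> intro <;> linarith
    have hpdf : mvnPdf μ S (B *ᵥ x + μ)
        = Real.exp (-(1/2 : ℝ) * (x ⬝ᵥ x)) / Real.sqrt ((2*Real.pi)^(N+1) * S.det) := by
      unfold mvnPdf
      rw [add_sub_cancel_right, hquad x]
    have hprodgauss : (∏ i, gauss (x i))
        = Real.exp (-(1/2 : ℝ) * (x ⬝ᵥ x)) * ((Real.sqrt (2*Real.pi)) ^ (N+1))⁻¹ := by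
      rw [hgauss]
      simp only
      rw [Finset.prod_div_distrib, ← Real.exp_sum, Finset.prod_const, Finset.card_univ,
        Fintype.card_fin, div_eq_mul_inv]
      congr 1
      unfold dotProduct
      rw [Finset.mul_sum]
      exact congrArg Real.exp (Finset.sum_congr rfl fun i _ => by ring)
    calc |B.det| * g (B *ᵥ x + μ)
        = (if x 0 ≤ c then (1:ℝ) else 0) *
            (Real.exp (-(1/2 : ℝ) * (x ⬝ᵥ x)) * (|B.det| / Real.sqrt ((2*Real.pi)^(N+1) * S.det)))
            := by rw [hgdef]; simp only [hind, hpdf]; ring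
      _ = (if x 0 ≤ c then (1:ℝ) else 0) * ∏ i, gauss (x i) := by rw [hconst, ← hprodgauss]
      _ = ∏ i, f i (x i) := by
          rw [hfdef]
          simp only
          rw [Finset.prod_mul_distrib, Finset.prod_ite_eq' Finset.univ (0 : Fin (N+1))
            (fun i => if x i ≤ c then (1:ℝ) else 0)]
          simp
  have step3 : (|B.det| * ∫ x, g (B *ᵥ x + μ)) = ∏ i, ∫ t, f i t := by
    rw [← MeasureTheory.integral_const_mul]
    simp_rw [hpoint]
    exact MeasureTheory.integral_fintype_prod_eq_prod (f := f)
  have hprod : (∏ i, ∫ t, f i t) = stdNormCDF c := by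
    rw [Fin.prod_univ_succ]
    have h0 : (∫ t, f 0 t) = stdNormCDF c := by
      have he : ∀ t:ℝ, f 0 t = Set.indicator (Set.Iic c) gauss t := by
        intro t
        rw [hfdef]
        by_cases h : t ≤ c <;> simp [Set.indicator, h, Set.mem_Iic]
      simp_rw [he]
      rw [MeasureTheory.integral_indicator measurableSet_Iic]
      rfl
    have hsucc : ∀ i : Fin N, (∫ t, f i.succ t) = 1 := by
      intro i
      have he : ∀ t:ℝ, f i.succ t = gauss t := by
        intro t; rw [hfdef]; simp [Fin.succ_ne_zero i]
      simp_rw [he]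
      exact gauss_integral_one
    rw [h0, Finset.prod_congr rfl (fun i _ => hsucc i), Finset.prod_const_one, mul_one]
  show (∫ y, g y) = stdNormCDF c
  rw [step1, step2, step3, hprod]


lemma key_pointwise {S : Matrix (Fin (N + 1)) (Fin (N + 1)) ℝ} (hS : S.PosDef)
    (m Λ : Fin (N + 1) → ℝ) (y : Fin (N + 1) → ℝ) :
    (mvnPdf m S y / mvnPdf (m + Λ) S y) ^ 4 * mvnPdf (m + Λ) S y
      = Real.exp (6 * (Λ ⬝ᵥ S⁻¹.mulVec Λ)) * mvnPdf (m - (3:ℝ) • Λ) S y := by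
  have hAsym : S⁻¹ᵀ = S⁻¹ := by
    have hST : Sᵀ = S := by
      ext i j
      have := congrFun (congrFun hS.1 i) j
      simpa [Matrix.conjTranspose_apply] using this
    rw [Matrix.transpose_nonsing_inv, hST]
  have hsym : ∀ v w : Fin (N+1) → ℝ, v ⬝ᵥ (S⁻¹ *ᵥ w) = w ⬝ᵥ (S⁻¹ *ᵥ v) := by
    intro v w
    calc v ⬝ᵥ (S⁻¹ *ᵥ w) = (S⁻¹ *ᵥ w) ⬝ᵥ v := dotProduct_comm _ _
      _ = w ⬝ᵥ (S⁻¹ᵀ *ᵥ v) := dot_transpose _ _ _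
      _ = w ⬝ᵥ (S⁻¹ *ᵥ v) := by rw [hAsym]
  have e2 : (y - (m + Λ)) ⬝ᵥ (S⁻¹ *ᵥ (y - (m + Λ)))
      = (y-m) ⬝ᵥ (S⁻¹ *ᵥ (y-m)) - 2 * ((y-m) ⬝ᵥ (S⁻¹ *ᵥ Λ)) + Λ ⬝ᵥ (S⁻¹ *ᵥ Λ) := by
    have h : y - (m + Λ) = (y - m) - Λ := by abel
    rw [h, Matrix.mulVec_sub, sub_dotProduct, dotProduct_sub, dotProduct_sub, hsym Λ (y-m)]
    ring
  have e3 : (y - (m - (3:ℝ) • Λ)) ⬝ᵥ (S⁻¹ *ᵥ (y - (m - (3:ℝ) • Λ)))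
      = (y-m) ⬝ᵥ (S⁻¹ *ᵥ (y-m)) + 6 * ((y-m) ⬝ᵥ (S⁻¹ *ᵥ Λ)) + 9 * (Λ ⬝ᵥ (S⁻¹ *ᵥ Λ)) := by
    have h : y - (m - (3:ℝ) • Λ) = (y - m) + (3:ℝ) • Λ := by abel
    rw [h, Matrix.mulVec_add, Matrix.mulVec_smul, add_dotProduct, dotProduct_add, dotProduct_add,
      smul_dotProduct, dotProduct_smul, dotProduct_smul, smul_dotProduct, hsym Λ (y-m)]
    simp only [smul_eq_mul]
    ring
  unfold mvnPdf
  rw [e2, e3]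
  have hdS : (0:ℝ) < S.det := hS.det_pos
  set D := Real.sqrt ((2*Real.pi)^(N+1) * S.det) with hDdef
  have hDpos : 0 < D := Real.sqrt_pos.mpr (by positivity)
  have hDne : D ≠ 0 := ne_of_gt hDpos
  set P := (y - m) ⬝ᵥ (S⁻¹ *ᵥ (y - m)) with hP
  set Q := (y - m) ⬝ᵥ (S⁻¹ *ᵥ Λ) with hQ
  set R := Λ ⬝ᵥ (S⁻¹ *ᵥ Λ) with hR
  have h1 : Real.exp (-(1/2)*P) / D / (Real.exp (-(1/2)*(P - 2*Q + R)) / D)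
      = Real.exp (-Q + R/2) := by
    rw [div_div_div_cancel_right₀, ← Real.exp_sub]
    · congr 1
      ring
    · exact hDne
  rw [h1, show (Real.exp (-Q + R/2))^4 = Real.exp (4*(-Q+R/2)) from by
    rw [← Real.exp_nat_mul]; norm_num]
  rw [← mul_div_assoc, ← mul_div_assoc, ← Real.exp_add, ← Real.exp_add]
  congr 2
  ring

end Stmt7Aux

theorem stmt7 {n : ℕ} (m Λ : Fin (n + 1) → ℝ) (S : Matrix (Fin (n + 1)) (Fin (n + 1)) ℝ)
    (hS : S.PosDef) (γ : ℝ) (hγ : 0 < γ)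
    (hΛ : Λ 0 = Real.log γ - m 0) :
    (∫ y : Fin (n + 1) → ℝ,
        (mvnPdf m S y / mvnPdf (m + Λ) S y) ^ 4 *
          Set.indicator {y : Fin (n + 1) → ℝ | Real.exp (y 0) ≤ γ} (fun _ => (1 : ℝ)) y *
          mvnPdf (m + Λ) S y) =
      Real.exp (6 * (Λ ⬝ᵥ S⁻¹.mulVec Λ)) *
        stdNormCDF (4 * (Real.log γ - m 0) / Real.sqrt (S 0 0)) := by
  have hset : {y : Fin (n + 1) → ℝ | Real.exp (y 0) ≤ γ}
      = {y : Fin (n + 1) → ℝ | y 0 ≤ Real.log γ} := by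
    ext y
    simp only [Set.mem_setOf_eq]
    exact (Real.le_log_iff_exp_le hγ).symm
  have hptw : ∀ y : Fin (n + 1) → ℝ,
      (mvnPdf m S y / mvnPdf (m + Λ) S y) ^ 4 *
          Set.indicator {y : Fin (n + 1) → ℝ | y 0 ≤ Real.log γ} (fun _ => (1 : ℝ)) y *
          mvnPdf (m + Λ) S y
      = Real.exp (6 * (Λ ⬝ᵥ S⁻¹.mulVec Λ)) *
          (Set.indicator {y : Fin (n + 1) → ℝ | y 0 ≤ Real.log γ} (fun _ => (1 : ℝ)) y *
            mvnPdf (m - (3:ℝ) • Λ) S y) := by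
    intro y
    have h := Stmt7Aux.key_pointwise hS m Λ y
    calc (mvnPdf m S y / mvnPdf (m + Λ) S y) ^ 4 *
          Set.indicator {y : Fin (n + 1) → ℝ | y 0 ≤ Real.log γ} (fun _ => (1 : ℝ)) y *
          mvnPdf (m + Λ) S y
        = Set.indicator {y : Fin (n + 1) → ℝ | y 0 ≤ Real.log γ} (fun _ => (1 : ℝ)) y *
            ((mvnPdf m S y / mvnPdf (m + Λ) S y) ^ 4 * mvnPdf (m + Λ) S y) := by ring
      _ = Set.indicator {y : Fin (n + 1) → ℝ | y 0 ≤ Real.log γ} (fun _ => (1 : ℝ)) y *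
            (Real.exp (6 * (Λ ⬝ᵥ S⁻¹.mulVec Λ)) * mvnPdf (m - (3:ℝ) • Λ) S y) := by rw [h]
      _ = _ := by ring
  simp only [hset]
  simp_rw [hptw]
  rw [MeasureTheory.integral_const_mul, Stmt7Aux.marg hS (m - (3:ℝ) • Λ) (Real.log γ)]
  have harg : Real.log γ - (m - (3:ℝ) • Λ) 0 = 4 * (Real.log γ - m 0) := by
    simp only [Pi.sub_apply, Pi.smul_apply, smul_eq_mul, hΛ]
    ring
  rw [harg]
end

section
/- Under the mean-shifted measure g with shift Λ* (Λ*₁ = log γ − μ₁, Λ*ₖ = (Σₖ₁/Σ₁₁)(log γ − μ₁)), the event {exp(Y₁) ≤ γ} has probability exactly 1/2, and the difference P₁ − P₂ equals P(exp(W₁) ≤ 1, exp(W₁) + Σᵢ₌₂^N cᵢ γ^{aᵢ} exp(Wᵢ) ≥ 1), where W ∼ 𝒩(0, Σ), aᵢ = Σᵢ₁/Σ₁₁ − 1, and cᵢ = exp(μᵢ − (Σᵢ₁/Σ₁₁) μ₁). -/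
open MeasureTheory Matrix Real Filter

/- ### Auxiliary lemmas -/

section SqrtCompat

open scoped MatrixOrder

noncomputable def Matrix.PosSemidef.sqrt {N : ℕ} {A : Matrix (Fin N) (Fin N) ℝ}
    (_ : A.PosSemidef) : Matrix (Fin N) (Fin N) ℝ :=
  CFC.sqrt A

lemma Matrix.PosSemidef.sq_sqrt {N : ℕ} {A : Matrix (Fin N) (Fin N) ℝ}
    (hA : A.PosSemidef) : hA.sqrt ^ 2 = A :=
  CFC.sq_sqrt A hA.nonneg

lemma Matrix.PosSemidef.posSemidef_sqrt {N : ℕ} {A : Matrix (Fin N) (Fin N) ℝ}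
    (hA : A.PosSemidef) : hA.sqrt.PosSemidef :=
  Matrix.nonneg_iff_posSemidef.mp (CFC.sqrt_nonneg A)

end SqrtCompat

section Aux

variable {N : ℕ}

lemma aux_gauss_comp (v : EuclideanSpace ℝ (Fin N)) :
    Real.exp (-(1/2) * ((fun i => v i) ⬝ᵥ (fun i => v i))) = Real.exp (-(1/2) * ‖v‖ ^ 2) := by
  congr 2
  rw [EuclideanSpace.norm_eq, Real.sq_sqrt (by positivity)]
  simp [dotProduct, sq, Real.norm_eq_abs, abs_mul_abs_self]

lemma aux_gauss_euclid_integrable :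
    Integrable (fun v : EuclideanSpace ℝ (Fin N) => Real.exp (-(1/2) * ‖v‖ ^ 2)) := by
  have h := (GaussianFourier.integrable_cexp_neg_mul_sq_norm_add
    (b := ((1:ℝ)/2 : ℂ)) (by norm_num) 0 (0 : EuclideanSpace ℝ (Fin N))).norm
  refine h.congr (Filter.Eventually.of_forall fun a => ?_)
  have harg : (-(((1:ℝ)/2 : ℂ)) * (‖a‖:ℂ) ^ 2 + 0 * ((inner ℝ (0 : EuclideanSpace ℝ (Fin N)) a : ℝ) : ℂ))
      = ((-(1/2) * ‖a‖ ^ 2 : ℝ) : ℂ) := by push_cast; ring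
  simp only [harg, Complex.norm_exp, Complex.ofReal_re]

lemma aux_gauss_euclid_integral :
    ∫ v : EuclideanSpace ℝ (Fin N), Real.exp (-(1/2) * ‖v‖ ^ 2)
      = (2 * π) ^ ((N : ℝ) / 2) := by
  have h := GaussianFourier.integral_rexp_neg_mul_sq_norm
    (V := EuclideanSpace ℝ (Fin N)) (b := (1:ℝ)/2) (by norm_num)
  rw [finrank_euclideanSpace_fin] at h
  have : π / ((1:ℝ)/2) = 2 * π := by ring
  rw [this] at h
  simpa using h

lemma aux_gauss_pi_integrable :
    Integrable (fun v : Fin N → ℝ => Real.exp (-(1/2) * (v ⬝ᵥ v))) := by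
  have e := EuclideanSpace.volume_preserving_symm_measurableEquiv_toLp (Fin N)
  rw [← e.integrable_comp_emb (MeasurableEquiv.measurableEmbedding _)]
  have : ((fun v : Fin N → ℝ => Real.exp (-(1/2) * (v ⬝ᵥ v)))
      ∘ (MeasurableEquiv.toLp 2 (Fin N → ℝ)).symm)
      = fun v : EuclideanSpace ℝ (Fin N) => Real.exp (-(1/2) * ‖v‖ ^ 2) := by
    funext v
    exact aux_gauss_comp v
  rw [this]
  exact aux_gauss_euclid_integrable

lemma aux_gauss_pi_integral :
    ∫ v : Fin N → ℝ, Real.exp (-(1/2) * (v ⬝ᵥ v)) = (2 * π) ^ ((N : ℝ) / 2) := by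
  have e := EuclideanSpace.volume_preserving_symm_measurableEquiv_toLp (Fin N)
  rw [← e.integral_comp (MeasurableEquiv.measurableEmbedding _)]
  rw [← aux_gauss_euclid_integral]
  congr 1
  funext v
  exact aux_gauss_comp v

variable {S : Matrix (Fin N) (Fin N) ℝ} (hS : S.PosDef)

lemma aux_quad_continuous :
    Continuous (fun w : Fin N → ℝ => w ⬝ᵥ S⁻¹.mulVec w) := by
  simp only [dotProduct, Matrix.mulVec]
  exact continuous_finset_sum _ fun i _ => (continuous_apply i).mul
    (continuous_finset_sum _ fun j _ => continuous_const.mul (continuous_apply j))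

lemma aux_phi_continuous :
    Continuous (fun w : Fin N → ℝ => Real.exp (-(1/2) * (w ⬝ᵥ S⁻¹.mulVec w))) :=
  Real.continuous_exp.comp (continuous_const.mul (aux_quad_continuous))

section WithPosDef

include hS

lemma aux_sqrt_mul : hS.posSemidef.sqrt * hS.posSemidef.sqrt = S := by
  rw [← pow_two]; exact hS.posSemidef.sq_sqrt

lemma aux_sqrt_det_sq : (hS.posSemidef.sqrt).det ^ 2 = S.det := by
  rw [← Matrix.det_pow, pow_two, aux_sqrt_mul hS]

lemma aux_sqrt_det_ne : (hS.posSemidef.sqrt).det ≠ 0 := by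
  intro h
  have := aux_sqrt_det_sq hS
  rw [h] at this
  have := hS.det_pos
  nlinarith

lemma aux_key : hS.posSemidef.sqrt * (S⁻¹ * hS.posSemidef.sqrt) = 1 := by
  set B := hS.posSemidef.sqrt with hB
  have h1 : S⁻¹ = B⁻¹ * B⁻¹ := by rw [← aux_sqrt_mul hS, Matrix.mul_inv_rev]
  rw [h1]
  calc B * (B⁻¹ * B⁻¹ * B) = (B * B⁻¹) * (B⁻¹ * B) := by noncomm_ring
    _ = 1 := by rw [Matrix.mul_nonsing_inv _ (isUnit_iff_ne_zero.mpr (aux_sqrt_det_ne hS)),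
        Matrix.nonsing_inv_mul _ (isUnit_iff_ne_zero.mpr (aux_sqrt_det_ne hS)), one_mul]

lemma aux_quad (v : Fin N → ℝ) :
    (hS.posSemidef.sqrt *ᵥ v) ⬝ᵥ S⁻¹ *ᵥ (hS.posSemidef.sqrt *ᵥ v) = v ⬝ᵥ v := by
  set B := hS.posSemidef.sqrt with hB
  have hsymm : Bᵀ = B := by
    have h := (hS.posSemidef.posSemidef_sqrt.isHermitian).eq
    rwa [Matrix.conjTranspose_eq_transpose_of_trivial] at h
  calc (B *ᵥ v) ⬝ᵥ S⁻¹ *ᵥ (B *ᵥ v)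
      = (v ᵥ* Bᵀ) ⬝ᵥ (S⁻¹ * B) *ᵥ v := by rw [Matrix.vecMul_transpose, Matrix.mulVec_mulVec]
    _ = (v ᵥ* (Bᵀ * (S⁻¹ * B))) ⬝ᵥ v := by
        rw [Matrix.dotProduct_mulVec, Matrix.vecMul_vecMul]
    _ = v ⬝ᵥ v := by rw [hsymm, aux_key hS, Matrix.vecMul_one]

lemma aux_phi_integrable :
    Integrable (fun w : Fin N → ℝ => Real.exp (-(1/2) * (w ⬝ᵥ S⁻¹.mulVec w))) := by
  set B := hS.posSemidef.sqrt with hB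
  set φ := fun w : Fin N → ℝ => Real.exp (-(1/2) * (w ⬝ᵥ S⁻¹.mulVec w)) with hφ
  have hmap : Measure.map (⇑(Matrix.toLin' B)) volume
      = ENNReal.ofReal |B.det⁻¹| • volume :=
    Real.map_matrix_volume_pi_eq_smul_volume_pi (aux_sqrt_det_ne hS)
  have hTmeas : AEMeasurable (⇑(Matrix.toLin' B)) volume :=
    (Matrix.toLin' B).continuous_of_finiteDimensional.measurable.aemeasurable
  have hcomp : (φ ∘ ⇑(Matrix.toLin' B)) = fun v => Real.exp (-(1/2) * (v ⬝ᵥ v)) := by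
    funext v
    simp only [Function.comp_apply, hφ, Matrix.toLin'_apply]
    rw [aux_quad hS]
  have h1 : Integrable φ (Measure.map (⇑(Matrix.toLin' B)) volume) := by
    rw [integrable_map_measure ((aux_phi_continuous (S := S)).aestronglyMeasurable) hTmeas]
    rw [hcomp]
    exact aux_gauss_pi_integrable
  rw [hmap] at h1
  have hc0 : ENNReal.ofReal |B.det⁻¹| ≠ 0 := by
    simp only [ne_eq, ENNReal.ofReal_eq_zero, not_le, abs_pos]
    exact inv_ne_zero (aux_sqrt_det_ne hS)
  exact (integrable_smul_measure hc0 ENNReal.ofReal_ne_top).mp h1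

lemma aux_phi_integral :
    ∫ w : Fin N → ℝ, Real.exp (-(1/2) * (w ⬝ᵥ S⁻¹.mulVec w))
      = Real.sqrt S.det * (2 * π) ^ ((N : ℝ) / 2) := by
  set B := hS.posSemidef.sqrt with hB
  set φ := fun w : Fin N → ℝ => Real.exp (-(1/2) * (w ⬝ᵥ S⁻¹.mulVec w)) with hφ
  have hmap : Measure.map (⇑(Matrix.toLin' B)) volume
      = ENNReal.ofReal |B.det⁻¹| • volume :=
    Real.map_matrix_volume_pi_eq_smul_volume_pi (aux_sqrt_det_ne hS)
  have hTmeas : AEMeasurable (⇑(Matrix.toLin' B)) volume :=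
    (Matrix.toLin' B).continuous_of_finiteDimensional.measurable.aemeasurable
  have h1 : ∫ v : Fin N → ℝ, φ (Matrix.toLin' B v) = ∫ w, φ w ∂(Measure.map (⇑(Matrix.toLin' B)) volume) :=
    (integral_map hTmeas ((aux_phi_continuous (S := S)).aestronglyMeasurable)).symm
  have h2 : ∫ v : Fin N → ℝ, φ (Matrix.toLin' B v) = (2 * π) ^ ((N : ℝ) / 2) := by
    rw [← aux_gauss_pi_integral (N := N)]
    congr 1
    funext v
    simp only [hφ, Matrix.toLin'_apply]
    rw [aux_quad hS]
  rw [h2, hmap, integral_smul_measure] at h1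
  have habs : ENNReal.toReal (ENNReal.ofReal |B.det⁻¹|) = |B.det|⁻¹ := by
    rw [ENNReal.toReal_ofReal (abs_nonneg _), abs_inv]
  rw [habs, smul_eq_mul] at h1
  have hdet : |B.det| = Real.sqrt S.det := by
    rw [← Real.sqrt_sq_eq_abs, aux_sqrt_det_sq hS]
  have habs_ne : |B.det| ≠ 0 := abs_ne_zero.mpr (aux_sqrt_det_ne hS)
  field_simp at h1 ⊢
  rw [← hdet]
  linarith [h1]

lemma aux_Z_eq : Real.sqrt ((2 * π) ^ N * S.det)
    = (2 * π) ^ ((N : ℝ) / 2) * Real.sqrt S.det := by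
  rw [Real.sqrt_mul (by positivity)]
  congr 1
  rw [Real.sqrt_eq_rpow, ← Real.rpow_natCast (2 * π) N, ← Real.rpow_mul (by positivity)]
  congr 1
  ring

lemma aux_mvn0_integrable : Integrable (mvnPdf (0 : Fin N → ℝ) S) := by
  have : mvnPdf (0 : Fin N → ℝ) S = fun w =>
      Real.exp (-(1/2) * (w ⬝ᵥ S⁻¹.mulVec w)) / Real.sqrt ((2 * π) ^ N * S.det) := by
    funext w; simp [mvnPdf]
  rw [this]
  exact (aux_phi_integrable hS).div_const _

lemma aux_mvn0_integral : ∫ w : Fin N → ℝ, mvnPdf (0 : Fin N → ℝ) S w = 1 := by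
  have : ∀ w : Fin N → ℝ, mvnPdf (0 : Fin N → ℝ) S w =
      Real.exp (-(1/2) * (w ⬝ᵥ S⁻¹.mulVec w)) / Real.sqrt ((2 * π) ^ N * S.det) := by
    intro w; simp [mvnPdf]
  have heq := funext this
  rw [heq, MeasureTheory.integral_div, aux_phi_integral hS, aux_Z_eq (hS := hS)]
  have h1 : (0:ℝ) < (2 * π) ^ ((N : ℝ) / 2) := Real.rpow_pos_of_pos (by positivity) _
  have h2 : (0:ℝ) < Real.sqrt S.det := Real.sqrt_pos.mpr hS.det_pos
  field_simp

lemma aux_mvn0_even (w : Fin N → ℝ) : mvnPdf (0 : Fin N → ℝ) S (-w) = mvnPdf 0 S w := by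
  simp [mvnPdf, Matrix.mulVec_neg, neg_dotProduct, dotProduct_neg]

end WithPosDef

end Aux

section AuxSucc

variable {n : ℕ} {S : Matrix (Fin (n+1)) (Fin (n+1)) ℝ}

lemma aux_hyperplane_null :
    (volume : Measure (Fin (n+1) → ℝ)) {w | w 0 = 0} = 0 := by
  rw [volume_pi]
  exact Measure.pi_hyperplane _ 0 0

lemma aux_half (hS : S.PosDef) :
    ∫ w in {w : Fin (n+1) → ℝ | w 0 ≤ 0}, mvnPdf (0 : Fin (n+1) → ℝ) S w = 1/2 := by
  set A : Set (Fin (n+1) → ℝ) := {w | w 0 ≤ 0} with hA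
  set A' : Set (Fin (n+1) → ℝ) := {w | 0 ≤ w 0} with hA'
  have hAmeas : MeasurableSet A := measurableSet_le (measurable_pi_apply 0) measurable_const
  have h1 : ∫ w in A, mvnPdf (0 : Fin (n+1) → ℝ) S w
      = ∫ w in A', mvnPdf (0 : Fin (n+1) → ℝ) S w := by
    have hmp := Measure.measurePreserving_neg (volume : Measure (Fin (n+1) → ℝ))
    have hemb : MeasurableEmbedding (fun w : Fin (n+1) → ℝ => -w) :=
      (Homeomorph.neg (Fin (n+1) → ℝ)).measurableEmbedding
    have h := hmp.setIntegral_preimage_emb hemb (mvnPdf (0 : Fin (n+1) → ℝ) S) A'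
    have hpre : (fun w : Fin (n+1) → ℝ => -w) ⁻¹' A' = A := by
      ext w; simp [hA, hA', neg_nonneg]
    rw [hpre] at h
    rw [← h]
    exact integral_congr_ae (Filter.Eventually.of_forall fun w => (aux_mvn0_even hS w).symm)
  have h2 : A' =ᵐ[volume] Aᶜ := by
    refine MeasureTheory.ae_eq_set.mpr ?_
    constructor
    · apply measure_mono_null _ (aux_hyperplane_null (n := n))
      intro w hw
      have h1 : (0:ℝ) ≤ w 0 := hw.1
      have h2 : w 0 ≤ 0 := not_not.mp hw.2
      exact le_antisymm h2 h1
    · apply measure_mono_null _ (aux_hyperplane_null (n := n))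
      intro w hw
      have h1 : ¬ (w 0 ≤ 0) := hw.1
      have h2 : ¬ ((0:ℝ) ≤ w 0) := hw.2
      exact absurd (lt_trans (not_le.mp h2) (not_le.mp h1)) (lt_irrefl _)
  have h3 := integral_add_compl hAmeas (aux_mvn0_integrable hS)
  rw [aux_mvn0_integral hS] at h3
  have h4 : ∫ w in A', mvnPdf (0 : Fin (n+1) → ℝ) S w
      = ∫ w in Aᶜ, mvnPdf (0 : Fin (n+1) → ℝ) S w := setIntegral_congr_set h2
  linarith

lemma aux_levelset_null (K : Fin (n+1) → ℝ) :
    (volume : Measure (Fin (n+1) → ℝ))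
      {w | Real.exp (w 0) + ∑ i ∈ Finset.univ.erase 0, K i * Real.exp (w i) = 1} = 0 := by
  classical
  have hsum : ∀ w : Fin (n+1) → ℝ,
      ∑ i ∈ Finset.univ.erase 0, K i * Real.exp (w i)
        = ∑ j : Fin n, K j.succ * Real.exp (w j.succ) := by
    intro w
    have h1 := Finset.add_sum_erase Finset.univ (fun i => K i * Real.exp (w i)) (Finset.mem_univ 0)
    have h2 := Fin.sum_univ_succ (fun i => K i * Real.exp (w i))
    rw [h2] at h1
    exact add_left_cancel h1
  set s' : Set (ℝ × (Fin n → ℝ)) :=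
    {p | Real.exp p.1 + ∑ j : Fin n, K j.succ * Real.exp (p.2 j) = 1} with hs'
  have hs'meas : MeasurableSet s' := by
    apply measurableSet_eq_fun
    · exact (Real.measurable_exp.comp measurable_fst).add
        (Finset.measurable_sum _ fun j _ =>
          (measurable_const.mul (Real.measurable_exp.comp ((measurable_pi_apply j).comp measurable_snd))))
    · exact measurable_const
  have hpre : {w : Fin (n+1) → ℝ |
      Real.exp (w 0) + ∑ i ∈ Finset.univ.erase 0, K i * Real.exp (w i) = 1}
      = (MeasurableEquiv.piFinSuccAbove (fun _ : Fin (n+1) => ℝ) 0) ⁻¹' s' := by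
    ext w
    simp only [Set.mem_setOf_eq, Set.mem_preimage, hs']
    rw [hsum w]
    constructor
    · intro h; convert h using 2 <;> simp [Fin.succAbove_zero, Fin.tail]
    · intro h; convert h using 2 <;> simp [Fin.succAbove_zero, Fin.tail]
  rw [hpre]
  rw [(volume_preserving_piFinSuccAbove (fun _ : Fin (n+1) => ℝ) 0).measure_preimage
    hs'meas.nullMeasurableSet]
  rw [Measure.volume_eq_prod]
  have hswap := Measure.measurePreserving_swap
    (μ := (volume : Measure (Fin n → ℝ))) (ν := (volume : Measure ℝ))
  have hsw : ((volume : Measure (Fin n → ℝ)).prod (volume : Measure ℝ)) (Prod.swap ⁻¹' s')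
      = ((volume : Measure ℝ).prod (volume : Measure (Fin n → ℝ))) s' :=
    hswap.measure_preimage hs'meas.nullMeasurableSet
  rw [← hsw]
  have hswmeas : MeasurableSet (Prod.swap ⁻¹' s' : Set ((Fin n → ℝ) × ℝ)) :=
    hs'meas.preimage measurable_swap
  rw [Measure.measure_prod_null hswmeas]
  refine Filter.Eventually.of_forall (fun r => ?_)
  have hsub : (Prod.mk r ⁻¹' (Prod.swap ⁻¹' s') : Set ℝ)
      ⊆ {Real.log (1 - ∑ j : Fin n, K j.succ * Real.exp (r j))} := by
    intro t ht
    simp only [Set.mem_preimage, Prod.swap_prod_mk, Set.mem_setOf_eq, hs'] at ht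
    simp only [Set.mem_singleton_iff]
    have : Real.exp t = 1 - ∑ j : Fin n, K j.succ * Real.exp (r j) := by linarith
    rw [← this, Real.log_exp]
  exact measure_mono_null hsub (measure_singleton _)

lemma aux_mvn_shift {N : ℕ} (S : Matrix (Fin N) (Fin N) ℝ) (μv w : Fin N → ℝ) :
    mvnPdf μv S (w + μv) = mvnPdf (0 : Fin N → ℝ) S w := by
  simp only [mvnPdf, add_sub_cancel_right, sub_zero]

end AuxSucc

theorem stmt11 {n : ℕ} (m : Fin (n + 1) → ℝ) (S : Matrix (Fin (n + 1)) (Fin (n + 1)) ℝ)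
    (hS : S.PosDef) (γ : ℝ) (hγ : 0 < γ)
    (Λ : Fin (n + 1) → ℝ)
    (hΛ : ∀ k, Λ k = if k = 0 then Real.log γ - m 0
      else S k 0 / S 0 0 * (Real.log γ - m 0)) :
    let g : (Fin (n + 1) → ℝ) → ℝ := fun y => mvnPdf (m + Λ) S y
    let a : Fin (n + 1) → ℝ := fun i => S i 0 / S 0 0 - 1
    let c : Fin (n + 1) → ℝ := fun i => Real.exp (m i - S i 0 / S 0 0 * m 0)
    (∫ y in {y : Fin (n + 1) → ℝ | Real.exp (y 0) ≤ γ}, g y) = 1 / 2 ∧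
    (∫ y in {y : Fin (n + 1) → ℝ | Real.exp (y 0) ≤ γ}, g y) -
        (∫ y in {y : Fin (n + 1) → ℝ | ∑ i, Real.exp (y i) ≤ γ}, g y) =
      ∫ w in {w : Fin (n + 1) → ℝ | Real.exp (w 0) ≤ 1 ∧
          1 ≤ Real.exp (w 0) +
            ∑ i ∈ Finset.univ.erase 0, c i * γ ^ (a i) * Real.exp (w i)},
        mvnPdf (0 : Fin (n + 1) → ℝ) S w := by
  intro g a c
  classical
  set v : Fin (n+1) → ℝ := m + Λ with hv
  -- pointwise relation between g and f
  have hgf : ∀ w : Fin (n+1) → ℝ, g (w + v) = mvnPdf (0 : Fin (n+1) → ℝ) S w := by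
    intro w
    exact aux_mvn_shift S v w
  -- shift lemma
  have hshift : ∀ E : Set (Fin (n+1) → ℝ),
      ∫ y in E, g y = ∫ w in (fun w => w + v) ⁻¹' E, mvnPdf (0 : Fin (n+1) → ℝ) S w := by
    intro E
    have hmp : MeasurePreserving (fun w : Fin (n+1) → ℝ => w + v) volume volume :=
      measurePreserving_add_right volume v
    have hemb : MeasurableEmbedding (fun w : Fin (n+1) → ℝ => w + v) :=
      (MeasurableEquiv.addRight v).measurableEmbedding
    have h := hmp.setIntegral_preimage_emb hemb g E
    rw [← h]
    exact integral_congr_ae (Filter.Eventually.of_forall hgf)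
  have hv0 : v 0 = Real.log γ := by simp [hv, hΛ 0]
  have hS00 : 0 < S 0 0 := by
    have h := hS.dotProduct_mulVec_pos (x := Pi.single (0 : Fin (n+1)) (1:ℝ)) (by
      intro h
      have := congr_fun h 0
      simp [Pi.single_apply] at this)
    simpa [dotProduct, Matrix.mulVec, Pi.single_apply] using h
  set A : Set (Fin (n+1) → ℝ) := {w | w 0 ≤ 0} with hA
  have hAmeas : MeasurableSet A := measurableSet_le (measurable_pi_apply 0) measurable_const
  have hpre1 : (fun w : Fin (n+1) → ℝ => w + v) ⁻¹' {y | Real.exp (y 0) ≤ γ} = A := by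
    ext w
    simp only [Set.mem_preimage, Set.mem_setOf_eq, Pi.add_apply, hv0, hA]
    rw [Real.exp_add, Real.exp_log hγ, mul_le_iff_le_one_left hγ, Real.exp_le_one_iff]
  have hP1 : (∫ y in {y : Fin (n + 1) → ℝ | Real.exp (y 0) ≤ γ}, g y) = 1/2 := by
    rw [hshift _, hpre1]
    exact aux_half hS
  refine ⟨hP1, ?_⟩
  -- second part
  set F : (Fin (n+1) → ℝ) → ℝ := fun w =>
    Real.exp (w 0) + ∑ i ∈ Finset.univ.erase 0, c i * γ ^ (a i) * Real.exp (w i) with hF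
  have ha0 : a 0 = 0 := by simp [a, div_self hS00.ne']
  have hc0 : c 0 = 1 := by simp [c, div_self hS00.ne']
  have hk0 : c 0 * γ ^ (a 0) = 1 := by rw [ha0, hc0, Real.rpow_zero, one_mul]
  have hexp_v : ∀ i, Real.exp (v i) = γ * (c i * γ ^ (a i)) := by
    intro i
    by_cases hi : i = 0
    · subst hi
      rw [hv0, Real.exp_log hγ, hk0, mul_one]
    · have hvi : v i = (m i - S i 0 / S 0 0 * m 0) + (Real.log γ * (S i 0 / S 0 0)) := by
        simp only [hv, Pi.add_apply, hΛ i, if_neg hi]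
        ring
      rw [hvi, Real.exp_add, ← Real.rpow_def_of_pos hγ]
      have hsplit : γ ^ (S i 0 / S 0 0) = γ ^ (a i) * γ := by
        have : S i 0 / S 0 0 = a i + 1 := by simp [a]
        rw [this, Real.rpow_add hγ, Real.rpow_one]
      rw [hsplit]
      simp only [c]
      ring
  have hpre2 : (fun w : Fin (n+1) → ℝ => w + v) ⁻¹' {y | ∑ i, Real.exp (y i) ≤ γ}
      = {w | F w ≤ 1} := by
    ext w
    simp only [Set.mem_preimage, Set.mem_setOf_eq, Pi.add_apply]
    have hsum : ∑ i, Real.exp (w i + v i) = γ * F w := by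
      have h1 : ∀ i : Fin (n+1), Real.exp (w i + v i)
          = γ * (c i * γ ^ (a i) * Real.exp (w i)) := by
        intro i
        rw [Real.exp_add, hexp_v i]
        ring
      rw [Finset.sum_congr rfl (fun i _ => h1 i), ← Finset.mul_sum]
      congr 1
      rw [hF]
      have h2 := Finset.add_sum_erase Finset.univ
        (fun i => c i * γ ^ (a i) * Real.exp (w i)) (Finset.mem_univ 0)
      rw [← h2]
      simp only [hk0, one_mul]
    rw [hsum, mul_le_iff_le_one_right hγ]
  have hkpos : ∀ i, 0 < c i * γ ^ (a i) := fun i =>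
    mul_pos (Real.exp_pos _) (Real.rpow_pos_of_pos hγ _)
  have hFmeas : Measurable F := by
    apply Measurable.add
    · exact Real.measurable_exp.comp (measurable_pi_apply 0)
    · exact Finset.measurable_sum _ fun i _ =>
        (measurable_const.mul (Real.measurable_exp.comp (measurable_pi_apply i)))
  have hBmeas : MeasurableSet {w : Fin (n+1) → ℝ | F w ≤ 1} :=
    measurableSet_le hFmeas measurable_const
  have hexpleF : ∀ w, Real.exp (w 0) ≤ F w := by
    intro w
    rw [hF]
    refine le_add_of_nonneg_right (Finset.sum_nonneg fun i _ => ?_)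
    have := hkpos i
    positivity
  have hBsubA : {w : Fin (n+1) → ℝ | F w ≤ 1} ⊆ A := by
    intro w hw
    simp only [Set.mem_setOf_eq] at hw
    simp only [hA, Set.mem_setOf_eq]
    rw [← Real.exp_le_one_iff]
    exact le_trans (hexpleF w) hw
  rw [hshift {y | Real.exp (y 0) ≤ γ}, hpre1, hshift {y | ∑ i, Real.exp (y i) ≤ γ}, hpre2]
  rw [← integral_diff hBmeas ((aux_mvn0_integrable hS).integrableOn) hBsubA]
  apply setIntegral_congr_set
  rw [MeasureTheory.ae_eq_set]
  constructor
  · have hsub : Set.diff (A \ {w : Fin (n+1) → ℝ | F w ≤ 1}) {w : Fin (n+1) → ℝ | Real.exp (w 0) ≤ 1 ∧ 1 ≤ F w} ⊆ (∅ : Set (Fin (n+1) → ℝ)) := by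
      intro w hw
      obtain ⟨⟨h1, h2⟩, h3⟩ := hw
      exact absurd ⟨Real.exp_le_one_iff.mpr h1, le_of_lt (not_le.mp h2)⟩ h3
    exact measure_mono_null hsub measure_empty
  · have hsub : Set.diff {w : Fin (n+1) → ℝ | Real.exp (w 0) ≤ 1 ∧ 1 ≤ F w} (A \ {w : Fin (n+1) → ℝ | F w ≤ 1}) ⊆ {w : Fin (n+1) → ℝ | F w = 1} := by
      intro w hw
      obtain ⟨⟨h1, h2⟩, h3⟩ := hw
      have hw0 : w 0 ≤ 0 := Real.exp_le_one_iff.mp h1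
      have hFle : F w ≤ 1 := by
        by_contra hcon
        exact h3 ⟨hw0, hcon⟩
      exact le_antisymm hFle h2
    refine measure_mono_null hsub ?_
    exact aux_levelset_null (fun i => c i * γ ^ (a i))
end
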